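/- arXiv:2504.16514 — 4 statements merged into one kernel-verified Lean document; each statement's English description precedes it below -/
import Mathlib

section
/- Let s be a sesquilinear form on a finitely generated right Q-module V, let v ∈ V, and let ξ ∈ I be a nonzero vector with a(ξ, s(v,v)·ξ) = 0. Let ξ' ∈ I be such that (ξ, ξ') is a k-basis of I, and let x ∈ Q = End_k(I) be an endomorphism with x·ξ = x·ξ' = ξ. Then s(v·x, v·x) ∈ k·1. In particular, if moreover v·x ≠ 0, then the generalized quadratic form [s] is isotropic, i.e. there is a nonzero u ∈ V with s(u,u) ∈ k·1. -/
/-!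
Since `x` sends both basis vectors to `ξ`, its image is the line `k ξ`, so `s(v x, v x) = x̄ s(v,v) x`
only sees `s(v,v) ξ`. In dimension two the `a`-orthogonal of `ξ` is the line `k ξ` itself, so the
hypothesis `a(ξ, s(v,v) ξ) = 0` makes `s(v,v) ξ` a multiple of `ξ`; and `x̄ ξ = 0`, because
`a(x̄ ξ, η) = a(ξ, x η)` vanishes for all `η` and `a` is nondegenerate. Hence `s(v x, v x) = 0`.
-/

namespace LinearMap.IsAlt

open Submodule

variable {R M : Type*} [CommRing R] [AddCommGroup M] [Module R M]
  {B : M →ₗ[R] M →ₗ[R] R} {e f : M}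

theorem apply_pair_ne_zero (hB : B.IsAlt) (hspan : span R {e, f} = ⊤) (hB0 : B ≠ 0) :
    B e f ≠ 0 := by
  intro hef
  have hfe : B f e = 0 := by rw [← hB.neg, hef, neg_zero]
  refine hB0 (LinearMap.ext₂ fun u w => ?_)
  obtain ⟨p, q, rfl⟩ := mem_span_pair.mp (hspan ▸ mem_top : u ∈ span R {e, f})
  obtain ⟨r, t, rfl⟩ := mem_span_pair.mp (hspan ▸ mem_top : w ∈ span R {e, f})
  simp [hB.self_eq_zero, hef, hfe]

variable [NoZeroDivisors R]

theorem mem_span_singleton_of_apply_eq_zero (hB : B.IsAlt) (hspan : span R {e, f} = ⊤)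
    (hef : B e f ≠ 0) {w : M} (hw : B e w = 0) : w ∈ R ∙ e := by
  obtain ⟨p, q, rfl⟩ := mem_span_pair.mp (hspan ▸ mem_top : w ∈ span R {e, f})
  simp only [map_add, map_smul, hB.self_eq_zero, smul_eq_mul, mul_zero, zero_add] at hw
  rw [(mul_eq_zero.mp hw).resolve_right hef, zero_smul, add_zero]
  exact smul_mem _ _ (mem_span_singleton_self e)

theorem eq_zero_of_forall_apply_eq_zero (hB : B.IsAlt) (hspan : span R {e, f} = ⊤)
    (hef : B e f ≠ 0) {u : M} (hu : ∀ w, B u w = 0) : u = 0 := by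
  obtain ⟨c, rfl⟩ := mem_span_singleton.mp
    (hB.mem_span_singleton_of_apply_eq_zero hspan hef (hB.eq_iff.mp (hu e)))
  have hcf : c * B e f = 0 := by simpa using hu f
  rw [(mul_eq_zero.mp hcf).resolve_right hef, zero_smul]

theorem adjoint_mul_mul_eq_zero (hB : B.IsAlt) (hspan : span R {e, f} = ⊤) (hef : B e f ≠ 0)
    {x x' y : Module.End R M} (hadj : ∀ u w, B u (x w) = B (x' u) w)
    (hx : ∀ w, x w ∈ R ∙ e) (hy : B e (y e) = 0) : x' * y * x = 0 := by
  have hx'e : x' e = 0 := hB.eq_zero_of_forall_apply_eq_zero hspan hef fun w => by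
    obtain ⟨c, hc⟩ := mem_span_singleton.mp (hx w)
    rw [← hadj, ← hc, map_smul, hB.self_eq_zero, smul_zero]
  obtain ⟨d, hd⟩ := mem_span_singleton.mp (hB.mem_span_singleton_of_apply_eq_zero hspan hef hy)
  ext w
  obtain ⟨c, hc⟩ := mem_span_singleton.mp (hx w)
  simp [← hc, ← hd, hx'e]

end LinearMap.IsAlt

theorem isotropy_descends_in_split_case_general
    -- k a field, I a 2-dimensional k-vector space, a a nonzero alternating bilinear form,
    -- Q = End_k(I) with its canonical (symplectic) involution conj
    (k : Type) [Field k] (I : Type) [AddCommGroup I] [Module k I]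
    (a : I →ₗ[k] I →ₗ[k] k) (halt : ∀ ξ : I, a ξ ξ = 0) (ha0 : a ≠ 0)
    (conj : Module.End k I → Module.End k I)
    (hconj : ∀ (x : Module.End k I) (ξ η : I), a ξ (x η) = a (conj x ξ) η)
    -- V a finitely generated right Q-module, s a sesquilinear form on V
    (V : Type) [AddCommGroup V] [Module (Module.End k I)ᵐᵒᵖ V]
    (s : V → V → Module.End k I)
    (hsesq : ∀ (v w : V) (x y : Module.End k I),
      s (MulOpposite.op x • v) (MulOpposite.op y • w) = conj x * s v w * y)
    -- v ∈ V and a nonzero ξ ∈ I with a(ξ, s(v,v)·ξ) = 0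
    (v : V) (ξ : I) (hiso : a ξ (s v v ξ) = 0)
    -- ξ' completes ξ to a k-basis of I, and x ∈ Q sends both ξ and ξ' to ξ
    (ξ' : I)
    (hspan : Submodule.span k {ξ, ξ'} = ⊤)
    (x : Module.End k I) (hx1 : x ξ = ξ) (hx2 : x ξ' = ξ) :
    (∃ c : k, s (MulOpposite.op x • v) (MulOpposite.op x • v) =
      algebraMap k (Module.End k I) c) ∧
    (MulOpposite.op x • v ≠ 0 →
      ∃ w : V, w ≠ 0 ∧ ∃ c : k, s w w = algebraMap k (Module.End k I) c) := by
  have hB : a.IsAlt := halt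
  have hd : a ξ ξ' ≠ 0 := hB.apply_pair_ne_zero hspan ha0
  have hrange : LinearMap.range x = k ∙ ξ := by
    rw [LinearMap.range_eq_map, ← hspan, Submodule.map_span, Set.image_pair, hx1, hx2,
      Set.pair_eq_singleton]
  have hzero : s (MulOpposite.op x • v) (MulOpposite.op x • v) = 0 := by
    rw [hsesq]
    exact hB.adjoint_mul_mul_eq_zero hspan hd (hconj x) (fun w => hrange ▸ ⟨w, rfl⟩) hiso
  exact ⟨⟨0, by rw [hzero, map_zero]⟩, fun hne => ⟨_, hne, 0, by rw [hzero, map_zero]⟩⟩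

theorem isotropy_descends_in_split_case
    -- k a field, I a 2-dimensional k-vector space, a a nonzero alternating bilinear form,
    -- Q = End_k(I) with its canonical (symplectic) involution conj
    (k : Type) [Field k] (I : Type) [AddCommGroup I] [Module k I]
    (hdim : Module.finrank k I = 2)
    (a : I →ₗ[k] I →ₗ[k] k) (halt : ∀ ξ : I, a ξ ξ = 0) (ha0 : a ≠ 0)
    (conj : Module.End k I → Module.End k I)
    (hconj : ∀ (x : Module.End k I) (ξ η : I), a ξ (x η) = a (conj x ξ) η)
    -- V a finitely generated right Q-module, s a sesquilinear form on V
    (V : Type) [AddCommGroup V] [Module (Module.End k I)ᵐᵒᵖ V]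
    [Module.Finite (Module.End k I)ᵐᵒᵖ V]
    (s : V → V → Module.End k I)
    (hs1 : ∀ v v' w : V, s (v + v') w = s v w + s v' w)
    (hs2 : ∀ v w w' : V, s v (w + w') = s v w + s v w')
    (hsesq : ∀ (v w : V) (x y : Module.End k I),
      s (MulOpposite.op x • v) (MulOpposite.op y • w) = conj x * s v w * y)
    -- v ∈ V and a nonzero ξ ∈ I with a(ξ, s(v,v)·ξ) = 0
    (v : V) (ξ : I) (hξ : ξ ≠ 0) (hiso : a ξ (s v v ξ) = 0)
    -- ξ' completes ξ to a k-basis of I, and x ∈ Q sends both ξ and ξ' to ξ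
    (ξ' : I) (hli : LinearIndependent k ![ξ, ξ'])
    (hspan : Submodule.span k {ξ, ξ'} = ⊤)
    (x : Module.End k I) (hx1 : x ξ = ξ) (hx2 : x ξ' = ξ) :
    (∃ c : k, s (MulOpposite.op x • v) (MulOpposite.op x • v) =
      algebraMap k (Module.End k I) c) ∧
    (MulOpposite.op x • v ≠ 0 →
      ∃ w : V, w ≠ 0 ∧ ∃ c : k, s w w = algebraMap k (Module.End k I) c) :=
  isotropy_descends_in_split_case_general k I a halt ha0 conj hconj V s hsesq v ξ hiso ξ' hspan x
    hx1 hx2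
end

section
/- Let I = Q_F·ε be the left ideal of Q_F generated by ε = 1 + j·t⁻¹. Then: (i) I = K(t)·ε = {f·ε : f ∈ K(t)}; (ii) every element of I has a unique expression of the form f·ε with f ∈ K(t) (in particular I is a 2-dimensional F-vector space); (iii) the map Q_F → End_F(I) sending each x ∈ Q_F to the operator of left multiplication by x on I is an isomorphism of F-algebras. -/
/-!
Write `Q_F = K(t) ⊕ K(t)·J` and `s = t⁻¹`. The identity `b·s·σ(s) = 1` says `(J s)² = 1`, and it
gives `J·ε = (b s)·ε`; hence `(u + vJ)·(fε) = (u f + v σ(f) b s)·ε`, so `I = K(t)·ε`, and `f` is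
recovered from `fε = f + f σ(s)·J`. Thus `Q_F` acts on `I ≅ K(t)` by the maps
`f ↦ u f + v' σ(f)`. As `σ` is an involution moving `t` (since `t² ≠ b`), `K(t) = F ⊕ F t`, and
these maps are exactly the `F`-linear endomorphisms of `K(t)`, each with unique `u, v'`.
-/

theorem RatFunc.X_mul_X_ne_algebraMap {K : Type*} [Field K] (c : K) :
    (X : RatFunc K) * X ≠ algebraMap K (RatFunc K) c := fun h => by
  have := congrArg intDegree h
  rw [intDegree_mul X_ne_zero X_ne_zero, intDegree_X, algebraMap_eq_C, intDegree_C] at this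
  omega

section FixedField

variable {L : Type*} [Field L] {σ : L ≃+* L} {t : L}

theorem RingEquiv.exists_fixed_add_fixed_mul (hσ : Function.Involutive σ) (ht : σ t ≠ t)
    (f : L) : ∃ c d : L, σ c = c ∧ σ d = d ∧ f = c + d * t := by
  have htσ : t - σ t ≠ 0 := sub_ne_zero.mpr ht.symm
  set d := (f - σ f) / (t - σ t)
  have hd : d * (t - σ t) = f - σ f := div_mul_cancel₀ _ htσ
  have hσd : σ d = d := by
    simp only [d, map_div₀, map_sub, hσ f, hσ t]
    rw [← neg_sub f, ← neg_sub t, neg_div_neg_eq]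
  refine ⟨f - d * t, d, ?_, hσd, by ring⟩
  rw [map_sub, map_mul, hσd]
  linear_combination hd

theorem RingEquiv.eq_of_forall_mul_add_mul_apply_eq (ht : σ t ≠ t) {u v u' v' : L}
    (H : ∀ f, u * f + v * σ f = u' * f + v' * σ f) : u = u' ∧ v = v' := by
  have h1 := H 1
  have ht' := H t
  rw [map_one] at h1
  have hv : (v - v') * (σ t - t) = 0 := by linear_combination ht' - t * h1
  have hv' : v = v' := sub_eq_zero.mp ((mul_eq_zero.mp hv).resolve_right (sub_ne_zero.mpr ht))
  exact ⟨by linear_combination h1 - hv', hv'⟩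

theorem RingEquiv.exists_forall_eq_mul_add_mul_apply (hσ : Function.Involutive σ)
    (ht : σ t ≠ t) (τ : L → L) (hadd : ∀ f g, τ (f + g) = τ f + τ g)
    (hsmul : ∀ c f, σ c = c → τ (c * f) = c * τ f) :
    ∃ u v : L, ∀ f, τ f = u * f + v * σ f := by
  have htσ : t - σ t ≠ 0 := sub_ne_zero.mpr ht.symm
  set v := (τ 1 * t - τ t) / (t - σ t)
  have hv : v * (t - σ t) = τ 1 * t - τ t := div_mul_cancel₀ _ htσ
  refine ⟨τ 1 - v, v, fun f => ?_⟩
  obtain ⟨c, d, hc, hd, rfl⟩ := RingEquiv.exists_fixed_add_fixed_mul hσ ht f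
  have hτ : τ (c + d * t) = c * τ 1 + d * τ t := by
    rw [hadd, ← hsmul c 1 hc, hsmul d t hd, mul_one]
  rw [hτ, map_add, map_mul, hc, hd]
  linear_combination d * hv

end FixedField

structure IsCrossedProduct {L A : Type*} [Field L] [Ring A] (ψ : L →+* A) (σ : L ≃+* L)
    (J : A) (B : L) : Prop where
  mul_self : J * J = ψ B
  mul_map : ∀ f, J * ψ f = ψ (σ f) * J
  existsUnique_eq : ∀ q, ∃! p : L × L, q = ψ p.1 + ψ p.2 * J

namespace IsCrossedProduct

variable {L A : Type*} [Field L] [Ring A] {ψ : L →+* A} {σ : L ≃+* L} {J : A} {B : L}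

theorem eq_of_add_mul_eq (h : IsCrossedProduct ψ σ J B) {u v u' v' : L}
    (he : ψ u + ψ v * J = ψ u' + ψ v' * J) : u = u' ∧ v = v' := by
  obtain ⟨p, -, hp⟩ := h.existsUnique_eq (ψ u + ψ v * J)
  have := (hp (u, v) rfl).trans (hp (u', v') he).symm
  exact Prod.ext_iff.mp this

theorem map_injective (h : IsCrossedProduct ψ σ J B) : Function.Injective ψ := fun f g hfg =>
  (h.eq_of_add_mul_eq (v := 0) (v' := 0) (by rw [hfg])).1

theorem involutive (h : IsCrossedProduct ψ σ J B) (hB : B ≠ 0) : Function.Involutive σ := by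
  intro f
  have hJJ : ψ (B * f) = ψ (σ (σ f) * B) := by
    rw [map_mul, ← h.mul_self, mul_assoc, h.mul_map, ← mul_assoc, h.mul_map, mul_assoc,
      h.mul_self, map_mul]
  exact mul_right_cancel₀ hB ((h.map_injective hJJ).symm.trans (mul_comm B f))

section Ideal

variable {s : L} {ε : A}

theorem map_mul_eq_add (h : IsCrossedProduct ψ σ J B) (hε : ε = 1 + J * ψ s) (f : L) :
    ψ f * ε = ψ f + ψ (f * σ s) * J := by
  rw [hε, mul_add, mul_one, ← mul_assoc, mul_assoc (ψ f), h.mul_map, ← mul_assoc, ← map_mul]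

theorem map_mul_injective (h : IsCrossedProduct ψ σ J B) (hε : ε = 1 + J * ψ s) :
    Function.Injective (fun f => ψ f * ε) := fun f g hfg =>
  (h.eq_of_add_mul_eq (by simpa only [h.map_mul_eq_add hε] using hfg)).1

theorem mul_eq_map_mul (h : IsCrossedProduct ψ σ J B) (hs : B * s * σ s = 1)
    (hε : ε = 1 + J * ψ s) : J * ε = ψ (B * s) * ε := by
  rw [h.map_mul_eq_add hε, hs, map_one, one_mul, hε, mul_add, mul_one, ← mul_assoc, h.mul_self,
    ← map_mul, add_comm]

theorem add_mul_mul_eq (h : IsCrossedProduct ψ σ J B) (hs : B * s * σ s = 1)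
    (hε : ε = 1 + J * ψ s) (u v f : L) :
    (ψ u + ψ v * J) * (ψ f * ε) = ψ (u * f + v * σ f * (B * s)) * ε := by
  have hJ : J * (ψ f * ε) = ψ (σ f * (B * s)) * ε := by
    rw [← mul_assoc, h.mul_map, mul_assoc, h.mul_eq_map_mul hs hε, ← mul_assoc, ← map_mul]
  rw [add_mul, mul_assoc, hJ, ← mul_assoc, ← mul_assoc, ← map_mul, ← map_mul, ← add_mul,
    ← map_add, mul_assoc]

theorem exists_mul_eq_map_mul (h : IsCrossedProduct ψ σ J B) (hs : B * s * σ s = 1)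
    (hε : ε = 1 + J * ψ s) (x : A) (f : L) : ∃ g, x * (ψ f * ε) = ψ g * ε := by
  obtain ⟨⟨u, v⟩, rfl, -⟩ := h.existsUnique_eq x
  exact ⟨_, h.add_mul_mul_eq hs hε u v f⟩

theorem exists_mul_eq_iff (h : IsCrossedProduct ψ σ J B) (hs : B * s * σ s = 1)
    (hε : ε = 1 + J * ψ s) (X : A) : (∃ Y, X = Y * ε) ↔ ∃ f, X = ψ f * ε := by
  constructor
  · rintro ⟨Y, rfl⟩
    simpa only [map_one, one_mul] using h.exists_mul_eq_map_mul hs hε Y 1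
  · rintro ⟨f, rfl⟩
    exact ⟨ψ f, rfl⟩

theorem eq_of_forall_mul_map_mul_eq (h : IsCrossedProduct ψ σ J B) (hs : B * s * σ s = 1)
    (hε : ε = 1 + J * ψ s) {t : L} (ht : σ t ≠ t) {x y : A}
    (hxy : ∀ f, x * (ψ f * ε) = y * (ψ f * ε)) : x = y := by
  obtain ⟨⟨u, v⟩, rfl, -⟩ := h.existsUnique_eq x
  obtain ⟨⟨u', v'⟩, rfl, -⟩ := h.existsUnique_eq y
  have H : ∀ f, u * f + v * (B * s) * σ f = u' * f + v' * (B * s) * σ f := fun f => by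
    have := h.map_mul_injective hε
      (by simpa only [h.add_mul_mul_eq hs hε] using hxy f)
    linear_combination this
  obtain ⟨rfl, hv⟩ := RingEquiv.eq_of_forall_mul_add_mul_apply_eq ht H
  rw [mul_right_cancel₀ (left_ne_zero_of_mul_eq_one hs) hv]

theorem exists_forall_apply_eq_mul (h : IsCrossedProduct ψ σ J B) (hs : B * s * σ s = 1)
    (hε : ε = 1 + J * ψ s) {t : L} (ht : σ t ≠ t) (T : A → A)
    (hadd : ∀ f g, T (ψ f * ε + ψ g * ε) = T (ψ f * ε) + T (ψ g * ε))
    (hsmul : ∀ c f, σ c = c → T (ψ c * (ψ f * ε)) = ψ c * T (ψ f * ε))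
    (hmaps : ∀ f, ∃ g, T (ψ f * ε) = ψ g * ε) :
    ∃ x, ∀ f, T (ψ f * ε) = x * (ψ f * ε) := by
  choose τ hτ using hmaps
  have hinj := h.map_mul_injective hε
  have τ_add : ∀ f g, τ (f + g) = τ f + τ g := fun f g => hinj <| by
    simp only [map_add, add_mul, ← hτ, hadd]
  have τ_smul : ∀ c f, σ c = c → τ (c * f) = c * τ f := fun c f hc => hinj <| by
    simp only [← hτ, map_mul, mul_assoc, hsmul c f hc]
  have hw : B * s ≠ 0 := left_ne_zero_of_mul_eq_one hs
  obtain ⟨u, v, huv⟩ := RingEquiv.exists_forall_eq_mul_add_mul_apply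
    (h.involutive (left_ne_zero_of_mul hw)) ht τ τ_add τ_smul
  refine ⟨ψ u + ψ (v / (B * s)) * J, fun f => ?_⟩
  rw [hτ, h.add_mul_mul_eq hs hε, huv, mul_right_comm _ (σ f), div_mul_cancel₀ _ hw]

end Ideal

end IsCrossedProduct

theorem ideal_I_and_endomorphism_algebra_general
    -- k is a field, K/k a degree-2 Galois extension with nontrivial automorphism ι,
    -- b a nonzero element of k
    (k K : Type) [Field k] [Field K] [Algebra k K]
    (b : k) (hb : b ≠ 0)
    -- σ is the automorphism of K(t) acting as ι on K with σ(t) = b·t⁻¹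
    (σ : RatFunc K ≃+* RatFunc K)
    (hσt : σ RatFunc.X = algebraMap K (RatFunc K) (algebraMap k K b) * RatFunc.X⁻¹)
    -- Q_F = Q ⊗_k F, identified with K(t) ⊕ K(t)·j : it contains K(t) via ψ and an
    -- element J (the image of j) with J·J = b, J·ψ(f) = ψ(σ f)·J, Q_F = ψ(K(t)) ⊕ ψ(K(t))·J,
    (QF : Type) [Ring QF]
    (ψ : RatFunc K →+* QF) (J : QF)
    (hJ2 : J * J = ψ (algebraMap K (RatFunc K) (algebraMap k K b)))
    (hJf : ∀ f : RatFunc K, J * ψ f = ψ (σ f) * J)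
    (hQFdec : ∀ q : QF, ∃! p : RatFunc K × RatFunc K, q = ψ p.1 + ψ p.2 * J)
    -- ε = 1 + j·t⁻¹
    (ε : QF) (hε : ε = 1 + J * ψ RatFunc.X⁻¹) :
    -- (i) the left ideal I = Q_F·ε equals K(t)·ε
    (∀ X : QF, (∃ Y : QF, X = Y * ε) ↔ ∃ f : RatFunc K, X = ψ f * ε) ∧
    -- (ii) the expression f·ε of an element of I, with f ∈ K(t), is unique
    (∀ f g : RatFunc K, ψ f * ε = ψ g * ε → f = g) ∧
    -- (iii) left multiplication Q_F → End_F(I) is an isomorphism of F-algebras: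
    -- left multiplication maps I to I, ...
    (∀ (x : QF) (f : RatFunc K), ∃ g : RatFunc K, x * (ψ f * ε) = ψ g * ε) ∧
    -- ... it is injective, ...
    (∀ x y : QF, (∀ f : RatFunc K, x * (ψ f * ε) = y * (ψ f * ε)) → x = y) ∧
    -- ... and every F-linear endomorphism of I is left multiplication by some x ∈ Q_F
    (∀ T : QF → QF,
      (∀ f g : RatFunc K, T (ψ f * ε + ψ g * ε) = T (ψ f * ε) + T (ψ g * ε)) →
      (∀ c f : RatFunc K, σ c = c → T (ψ c * (ψ f * ε)) = ψ c * T (ψ f * ε)) →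
      (∀ f : RatFunc K, ∃ g : RatFunc K, T (ψ f * ε) = ψ g * ε) →
      ∃ x : QF, ∀ f : RatFunc K, T (ψ f * ε) = x * (ψ f * ε)) := by
  set B := algebraMap K (RatFunc K) (algebraMap k K b)
  have hB : B ≠ 0 := by simpa [B] using hb
  have hX : σ RatFunc.X ≠ RatFunc.X := fun h => RatFunc.X_mul_X_ne_algebraMap _
    ((mul_inv_eq_iff_eq_mul₀ RatFunc.X_ne_zero).mp (hσt ▸ h)).symm
  have hs : B * RatFunc.X⁻¹ * σ RatFunc.X⁻¹ = 1 := by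
    rw [map_inv₀, hσt]
    exact mul_inv_cancel₀ (mul_ne_zero hB (inv_ne_zero RatFunc.X_ne_zero))
  have h : IsCrossedProduct ψ σ J B := ⟨hJ2, hJf, hQFdec⟩
  exact ⟨h.exists_mul_eq_iff hs hε, h.map_mul_injective hε,
    h.exists_mul_eq_map_mul hs hε, fun _ _ => h.eq_of_forall_mul_map_mul_eq hs hε hX,
    h.exists_forall_apply_eq_mul hs hε hX⟩

theorem ideal_I_and_endomorphism_algebra
    -- k is a field, K/k a degree-2 Galois extension with nontrivial automorphism ι,
    -- b a nonzero element of k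
    (k K : Type) [Field k] [Field K] [Algebra k K]
    (hrank : Module.finrank k K = 2)
    (ι : K ≃ₐ[k] K) (hι : ∃ x : K, ι x ≠ x)
    (hι2 : ∀ x : K, ι (ι x) = x)
    (hfix : ∀ x : K, ι x = x → ∃ c : k, algebraMap k K c = x)
    (b : k) (hb : b ≠ 0)
    -- Q = (K, ι, b) is the crossed-product quaternion k-algebra, a division ring,
    -- containing K via φ, with j·j = b, j·x = ι(x)·j, and Q = K ⊕ K·j
    (Q : Type) [DivisionRing Q] [Algebra k Q]
    (φ : K →ₐ[k] Q) (j : Q)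
    (hj2 : j * j = algebraMap k Q b)
    (hjx : ∀ x : K, j * φ x = φ (ι x) * j)
    (hQdec : ∀ q : Q, ∃! p : K × K, q = φ p.1 + φ p.2 * j)
    -- σ is the automorphism of K(t) acting as ι on K with σ(t) = b·t⁻¹
    (σ : RatFunc K ≃+* RatFunc K)
    (hσK : ∀ x : K, σ (algebraMap K (RatFunc K) x) = algebraMap K (RatFunc K) (ι x))
    (hσt : σ RatFunc.X = algebraMap K (RatFunc K) (algebraMap k K b) * RatFunc.X⁻¹)
    -- Q_F = Q ⊗_k F, identified with K(t) ⊕ K(t)·j : it contains K(t) via ψ and an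
    -- element J (the image of j) with J·J = b, J·ψ(f) = ψ(σ f)·J, Q_F = ψ(K(t)) ⊕ ψ(K(t))·J,
    -- and Q embeds via φ' compatibly with φ and j
    (QF : Type) [Ring QF]
    (ψ : RatFunc K →+* QF) (J : QF)
    (hJ2 : J * J = ψ (algebraMap K (RatFunc K) (algebraMap k K b)))
    (hJf : ∀ f : RatFunc K, J * ψ f = ψ (σ f) * J)
    (hQFdec : ∀ q : QF, ∃! p : RatFunc K × RatFunc K, q = ψ p.1 + ψ p.2 * J)
    (φ' : Q →+* QF)
    (hφ'K : ∀ x : K, φ' (φ x) = ψ (algebraMap K (RatFunc K) x))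
    (hφ'j : φ' j = J)
    -- ε = 1 + j·t⁻¹
    (ε : QF) (hε : ε = 1 + J * ψ RatFunc.X⁻¹) :
    -- (i) the left ideal I = Q_F·ε equals K(t)·ε
    (∀ X : QF, (∃ Y : QF, X = Y * ε) ↔ ∃ f : RatFunc K, X = ψ f * ε) ∧
    -- (ii) the expression f·ε of an element of I, with f ∈ K(t), is unique
    (∀ f g : RatFunc K, ψ f * ε = ψ g * ε → f = g) ∧
    -- (iii) left multiplication Q_F → End_F(I) is an isomorphism of F-algebras:
    -- left multiplication maps I to I, ...
    (∀ (x : QF) (f : RatFunc K), ∃ g : RatFunc K, x * (ψ f * ε) = ψ g * ε) ∧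
    -- ... it is injective, ...
    (∀ x y : QF, (∀ f : RatFunc K, x * (ψ f * ε) = y * (ψ f * ε)) → x = y) ∧
    -- ... and every F-linear endomorphism of I is left multiplication by some x ∈ Q_F
    (∀ T : QF → QF,
      (∀ f g : RatFunc K, T (ψ f * ε + ψ g * ε) = T (ψ f * ε) + T (ψ g * ε)) →
      (∀ c f : RatFunc K, σ c = c → T (ψ c * (ψ f * ε)) = ψ c * T (ψ f * ε)) →
      (∀ f : RatFunc K, ∃ g : RatFunc K, T (ψ f * ε) = ψ g * ε) →
      ∃ x : QF, ∀ f : RatFunc K, T (ψ f * ε) = x * (ψ f * ε)) :=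
  ideal_I_and_endomorphism_algebra_general k K b hb σ hσt QF ψ J hJ2 hJf hQFdec ε hε
end

section
/- The formula a(f·ε, g·ε) = u·(σ(f)·g − f·σ(g)) for f, g ∈ K(t) gives a well-defined nonzero alternating F-bilinear form a : I × I → F (well-defined since every element of I has a unique expression f·ε with f ∈ K(t)). Moreover, for every x ∈ Q (viewed inside Q_F via x ↦ x ⊗ 1) and every ξ ∈ I, the equation a(ξ, x·ξ) = 0 holds if and only if x ∈ k·1 or ξ = 0. -/
/-- The value `a(f·ε, g·ε) = u·(σ(f)·g − f·σ(g))` of the alternating form `a` on `I`,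
expressed through the unique representations `f·ε`, `g·ε` of its arguments. -/
noncomputable def aForm {K : Type} [Field K] (σ : RatFunc K ≃+* RatFunc K) (u : K)
    (f g : RatFunc K) : RatFunc K :=
  algebraMap K (RatFunc K) u * (σ f * g - f * σ g)

/-! If `a(ξ, x·ξ) = 0` for `ξ = f·ε ≠ 0` and `x·ξ = g·ε`, then `λ = g/f` is `σ`-invariant.
Writing `x = x₀ + x₁·j` one has `x·(f·ε) = (x₀·f + x₁·σ(f)·σ(t))·ε`; applying `σ` and multiplying
the two relations shows that `λ` is a root of the reduced characteristic polynomial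
`λ² − (x₀ + ι x₀)·λ + (x₀·ι x₀ − b·x₁·ι x₁)` of `x`. As `K` is algebraically closed in `K(t)`,
`λ` is a constant fixed by `ι`, i.e. `λ ∈ k`, and then `(x − λ)·ξ = 0` in `Q_F` with `x − λ ∈ Q`
forces `x = λ` because `Q` is a division ring. -/

namespace RatFunc

variable {K : Type*} [Field K]

theorem exists_eq_algebraMap_of_isAlgebraic {f : RatFunc K} (hf : IsAlgebraic K f) :
    ∃ c : K, f = algebraMap K (RatFunc K) c := by
  by_contra h
  exact transcendental_of_ne_C f (by simpa [algebraMap_eq_C] using h) hf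

theorem exists_eq_algebraMap_of_quadratic {f : RatFunc K} (s n : K)
    (h : f * f - algebraMap K (RatFunc K) s * f + algebraMap K (RatFunc K) n = 0) :
    ∃ c : K, f = algebraMap K (RatFunc K) c := by
  refine exists_eq_algebraMap_of_isAlgebraic (IsIntegral.isAlgebraic
    ⟨Polynomial.X ^ 2 - Polynomial.C s * Polynomial.X + Polynomial.C n, by monicity!, ?_⟩)
  simp only [Polynomial.eval₂_add, Polynomial.eval₂_sub, Polynomial.eval₂_mul,
    Polynomial.eval₂_pow, Polynomial.eval₂_X, Polynomial.eval₂_C]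
  linear_combination h

theorem X_mul_X_ne_algebraMap_s4 (c : K) : (X : RatFunc K) * X ≠ algebraMap K (RatFunc K) c := by
  intro h
  obtain ⟨c', hc'⟩ := exists_eq_algebraMap_of_quadratic 0 (-c) (f := X) (by simp [h])
  exact transcendental_X (hc' ▸ isAlgebraic_algebraMap c')

theorem involutive_of_apply_X {σ : RatFunc K ≃+* RatFunc K} {ι : K → K}
    (hι : Function.Involutive ι)
    (hσK : ∀ x : K, σ (algebraMap K (RatFunc K) x) = algebraMap K (RatFunc K) (ι x))
    {β : K} (hβ : ι β = β) (hβ0 : β ≠ 0) (hσX : σ X = algebraMap K (RatFunc K) β * X⁻¹) :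
    Function.Involutive σ := by
  have hσσ : σ.toRingHom.comp σ.toRingHom = RingHom.id _ :=
    IsLocalization.ringHom_ext (nonZeroDivisors (Polynomial K)) <| Polynomial.ringHom_ext
      (fun a => by simp [← algebraMap_eq_C, hσK, hι a]) <| by
        have : algebraMap K (RatFunc K) β ≠ 0 := by simpa using hβ0
        simp only [RingHom.comp_apply, RingEquiv.toRingHom_eq_coe, RingHom.coe_coe,
          algebraMap_X, RingHom.id_apply]
        rw [hσX, map_mul, map_inv₀, hσX, hσK, hβ]
        field_simp
  exact fun f => RingHom.congr_fun hσσ f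

theorem X_mul_map_X {σ : RatFunc K ≃+* RatFunc K} {β : K}
    (hσX : σ X = algebraMap K (RatFunc K) β * X⁻¹) : X * σ X = algebraMap K (RatFunc K) β := by
  rw [hσX, mul_left_comm, mul_inv_cancel₀ X_ne_zero, mul_one]

end RatFunc

section aForm

variable {K : Type} [Field K] {σ : RatFunc K ≃+* RatFunc K} {u : K}

theorem aForm_self (f : RatFunc K) : aForm σ u f f = 0 := by
  rw [aForm]; ring

theorem aForm_add_left (f₁ f₂ g : RatFunc K) :
    aForm σ u (f₁ + f₂) g = aForm σ u f₁ g + aForm σ u f₂ g := by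
  simp only [aForm, map_add]; ring

theorem aForm_add_right (f g₁ g₂ : RatFunc K) :
    aForm σ u f (g₁ + g₂) = aForm σ u f g₁ + aForm σ u f g₂ := by
  simp only [aForm, map_add]; ring

theorem aForm_mul_left {c : RatFunc K} (hc : σ c = c) (f g : RatFunc K) :
    aForm σ u (c * f) g = c * aForm σ u f g := by
  simp only [aForm, map_mul, hc]; ring

theorem aForm_mul_right {c : RatFunc K} (hc : σ c = c) (f g : RatFunc K) :
    aForm σ u f (c * g) = c * aForm σ u f g := by
  simp only [aForm, map_mul, hc]; ring

theorem map_aForm (hσ : Function.Involutive σ)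
    (hu : σ (algebraMap K (RatFunc K) u) = -algebraMap K (RatFunc K) u) (f g : RatFunc K) :
    σ (aForm σ u f g) = aForm σ u f g := by
  simp only [aForm, map_mul, map_sub, hσ _, hu]; ring

theorem aForm_eq_zero_iff (hu : u ≠ 0) {f g : RatFunc K} :
    aForm σ u f g = 0 ↔ σ f * g = f * σ g := by
  simp [aForm, hu, sub_eq_zero]

theorem aForm_one_X_ne_zero (hu : u ≠ 0) {β : K}
    (hσX : σ RatFunc.X = algebraMap K (RatFunc K) β * RatFunc.X⁻¹) :
    aForm σ u 1 RatFunc.X ≠ 0 := by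
  rw [Ne, aForm_eq_zero_iff hu, map_one, one_mul, one_mul]
  intro h
  apply RatFunc.X_mul_X_ne_algebraMap_s4 β
  rw [← RatFunc.X_mul_map_X hσX, ← h]

theorem map_div_eq_of_aForm_eq_zero (hu : u ≠ 0) {f g : RatFunc K} (hf : f ≠ 0)
    (h : aForm σ u f g = 0) : σ (g / f) = g / f := by
  rw [aForm_eq_zero_iff hu] at h
  rw [map_div₀, div_eq_div_iff ((map_ne_zero σ).2 hf) hf]
  linear_combination -h

end aForm

section twisted

variable {K : Type} [Field K] {σ : RatFunc K ≃+* RatFunc K} {ι : K → K}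

theorem exists_eq_algebraMap_of_map_eq (hσ : Function.Involutive σ)
    (hσK : ∀ x : K, σ (algebraMap K (RatFunc K) x) = algebraMap K (RatFunc K) (ι x))
    {β : K} (hXσX : RatFunc.X * σ RatFunc.X = algebraMap K (RatFunc K) β)
    {f l : RatFunc K} (hf : f ≠ 0) (hl : σ l = l) (x₀ x₁ : K)
    (h : l * f = algebraMap K (RatFunc K) x₀ * f
      + algebraMap K (RatFunc K) x₁ * (σ f * σ RatFunc.X)) :
    ∃ c : K, l = algebraMap K (RatFunc K) c := by
  have hσh : l * σ f = algebraMap K (RatFunc K) (ι x₀) * σ f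
      + algebraMap K (RatFunc K) (ι x₁) * (f * RatFunc.X) := by
    simpa only [map_add, map_mul, hσK, hσ _, hl] using congrArg σ h
  refine RatFunc.exists_eq_algebraMap_of_quadratic (x₀ + ι x₀) (x₀ * ι x₀ - β * (x₁ * ι x₁)) ?_
  refine mul_right_cancel₀ (mul_ne_zero hf ((map_ne_zero σ).2 hf)) ?_
  simp only [map_add, map_sub, map_mul]
  linear_combination ((l - algebraMap K (RatFunc K) (ι x₀)) * σ f) * h
    + (algebraMap K (RatFunc K) x₁ * (σ f * σ RatFunc.X)) * hσh
    + (algebraMap K (RatFunc K) x₁ * algebraMap K (RatFunc K) (ι x₁) * f * σ f) * hXσX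

theorem exists_fixed_of_aForm_eq_zero {u : K} (hu : u ≠ 0) (hσ : Function.Involutive σ)
    (hσK : ∀ x : K, σ (algebraMap K (RatFunc K) x) = algebraMap K (RatFunc K) (ι x))
    {β : K} (hXσX : RatFunc.X * σ RatFunc.X = algebraMap K (RatFunc K) β)
    {f g : RatFunc K} (hf : f ≠ 0) (x₀ x₁ : K)
    (hg : g = algebraMap K (RatFunc K) x₀ * f
      + algebraMap K (RatFunc K) x₁ * (σ f * σ RatFunc.X))
    (h : aForm σ u f g = 0) :
    ∃ c : K, ι c = c ∧ g = algebraMap K (RatFunc K) c * f := by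
  have hl := map_div_eq_of_aForm_eq_zero hu hf h
  obtain ⟨c, hc⟩ := exists_eq_algebraMap_of_map_eq hσ hσK hXσX hf hl x₀ x₁
    (by rw [div_mul_cancel₀ _ hf, hg])
  refine ⟨c, (algebraMap K (RatFunc K)).injective (by rw [← hσK, ← hc, hl]), ?_⟩
  rw [← hc, div_mul_cancel₀ _ hf]

end twisted

section crossedProduct

variable {K : Type} [Field K] {σ : RatFunc K ≃+* RatFunc K}
  {QF : Type} [Ring QF] {ψ : RatFunc K →+* QF} {J : QF}

theorem mul_one_add_J_mul (hJf : ∀ f : RatFunc K, J * ψ f = ψ (σ f) * J) (s h : RatFunc K) :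
    ψ h * (1 + J * ψ s) = ψ h + ψ (h * σ s) * J := by
  rw [mul_add, mul_one, hJf, ← mul_assoc, ← map_mul]

theorem injective_mul_one_add_J_mul (hJf : ∀ f : RatFunc K, J * ψ f = ψ (σ f) * J)
    (hdec : ∀ q : QF, ∃! p : RatFunc K × RatFunc K, q = ψ p.1 + ψ p.2 * J) (s : RatFunc K) :
    Function.Injective fun h => ψ h * (1 + J * ψ s) := by
  intro h₁ h₂ hh
  obtain ⟨p, -, hp⟩ := hdec (ψ h₁ * (1 + J * ψ s))
  have e₁ := hp (h₁, h₁ * σ s) (mul_one_add_J_mul hJf s h₁)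
  have e₂ := hp (h₂, h₂ * σ s) (hh.trans (mul_one_add_J_mul hJf s h₂))
  exact congrArg Prod.fst (e₁.trans e₂.symm)

theorem add_mul_J_mul_mul_eq (hJf : ∀ f : RatFunc K, J * ψ f = ψ (σ f) * J) {ε : QF}
    (hJε : J * ε = ψ (σ RatFunc.X) * ε) (a b h : RatFunc K) :
    (ψ a + ψ b * J) * (ψ h * ε) = ψ (a * h + b * (σ h * σ RatFunc.X)) * ε := by
  rw [add_mul, map_add, add_mul, ← mul_assoc, ← map_mul, mul_assoc, ← mul_assoc J, hJf,
    mul_assoc, hJε, ← mul_assoc, ← mul_assoc, ← map_mul, ← map_mul, mul_assoc]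

theorem J_mul_one_add_J_mul_X_inv (hJf : ∀ f : RatFunc K, J * ψ f = ψ (σ f) * J) {β : K}
    (hJ2 : J * J = ψ (algebraMap K (RatFunc K) β))
    (hσX : σ RatFunc.X = algebraMap K (RatFunc K) β * RatFunc.X⁻¹) :
    J * (1 + J * ψ RatFunc.X⁻¹) = ψ (σ RatFunc.X) * (1 + J * ψ RatFunc.X⁻¹) := by
  rw [mul_one_add_J_mul hJf, ← map_mul, mul_inv_cancel₀ RatFunc.X_ne_zero, map_one, map_one,
    one_mul, mul_add, mul_one, ← mul_assoc, hJ2, ← map_mul, ← hσX, add_comm]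

end crossedProduct

theorem eq_of_map_mul_eq {Q R : Type*} [DivisionRing Q] [Ring R] (φ : Q →+* R) {x y : Q} {ξ : R}
    (h : φ x * ξ = φ y * ξ) (hξ : ξ ≠ 0) : x = y := by
  by_contra hne
  refine hξ (((Ne.isUnit (sub_ne_zero.2 hne)).map φ).mul_right_eq_zero.1 ?_)
  rw [map_sub, sub_mul, h, sub_self]

theorem alternating_form_on_I_general
    -- k is a field, K/k a degree-2 Galois extension with nontrivial automorphism ι,
    -- b a nonzero element of k
    (k K : Type) [Field k] [Field K] [Algebra k K]
    (ι : K ≃ₐ[k] K)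
    (hι2 : ∀ x : K, ι (ι x) = x)
    (hfix : ∀ x : K, ι x = x → ∃ c : k, algebraMap k K c = x)
    (b : k) (hb : b ≠ 0)
    -- Q = (K, ι, b) is the crossed-product quaternion k-algebra, a division ring,
    -- containing K via φ, with j·j = b, j·x = ι(x)·j, and Q = K ⊕ K·j
    (Q : Type) [DivisionRing Q] [Algebra k Q]
    (φ : K →ₐ[k] Q) (j : Q)
    (hQdec : ∀ q : Q, ∃! p : K × K, q = φ p.1 + φ p.2 * j)
    -- σ is the automorphism of K(t) acting as ι on K with σ(t) = b·t⁻¹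
    (σ : RatFunc K ≃+* RatFunc K)
    (hσK : ∀ x : K, σ (algebraMap K (RatFunc K) x) = algebraMap K (RatFunc K) (ι x))
    (hσt : σ RatFunc.X = algebraMap K (RatFunc K) (algebraMap k K b) * RatFunc.X⁻¹)
    -- Q_F = Q ⊗_k F, identified with K(t) ⊕ K(t)·j : it contains K(t) via ψ and an
    -- element J (the image of j) with J·J = b, J·ψ(f) = ψ(σ f)·J, Q_F = ψ(K(t)) ⊕ ψ(K(t))·J,
    -- and Q embeds via φ' compatibly with φ and j
    (QF : Type) [Ring QF]
    (ψ : RatFunc K →+* QF) (J : QF)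
    (hJ2 : J * J = ψ (algebraMap K (RatFunc K) (algebraMap k K b)))
    (hJf : ∀ f : RatFunc K, J * ψ f = ψ (σ f) * J)
    (hQFdec : ∀ q : QF, ∃! p : RatFunc K × RatFunc K, q = ψ p.1 + ψ p.2 * J)
    (φ' : Q →+* QF)
    (hφ'K : ∀ x : K, φ' (φ x) = ψ (algebraMap K (RatFunc K) x))
    (hφ'j : φ' j = J)
    -- u is a nonzero element of K with ι(u) = -u
    (u : K) (hu : u ≠ 0) (hιu : ι u = -u)
    -- ε = 1 + j·t⁻¹
    (ε : QF) (hε : ε = 1 + J * ψ RatFunc.X⁻¹) :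
    -- a is alternating ...
    (∀ f : RatFunc K, aForm σ u f f = 0) ∧
    -- ... nonzero ...
    (∃ f g : RatFunc K, aForm σ u f g ≠ 0) ∧
    -- ... takes values in F = K(t)^σ ...
    (∀ f g : RatFunc K, σ (aForm σ u f g) = aForm σ u f g) ∧
    -- ... and is F-bilinear
    (∀ f₁ f₂ g : RatFunc K, aForm σ u (f₁ + f₂) g = aForm σ u f₁ g + aForm σ u f₂ g) ∧
    (∀ f g₁ g₂ : RatFunc K, aForm σ u f (g₁ + g₂) = aForm σ u f g₁ + aForm σ u f g₂) ∧
    (∀ c f g : RatFunc K, σ c = c →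
      aForm σ u (c * f) g = c * aForm σ u f g ∧ aForm σ u f (c * g) = c * aForm σ u f g) ∧
    -- for x ∈ Q and ξ = f·ε ∈ I (with x·ξ = g·ε), a(ξ, x·ξ) = 0 iff x ∈ k·1 or ξ = 0
    (∀ (x : Q) (f g : RatFunc K), φ' x * (ψ f * ε) = ψ g * ε →
      (aForm σ u f g = 0 ↔ (∃ c : k, x = algebraMap k Q c) ∨ ψ f * ε = 0)) := by
  have hσ : Function.Involutive σ :=
    RatFunc.involutive_of_apply_X hι2 hσK (ι.commutes b) ((map_ne_zero _).2 hb) hσt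
  have hφ'k (c : k) :
      φ' (algebraMap k Q c) = ψ (algebraMap K (RatFunc K) (algebraMap k K c)) := by
    rw [← φ.commutes c, hφ'K]
  subst hε
  have hinj := injective_mul_one_add_J_mul hJf hQFdec RatFunc.X⁻¹
  refine ⟨aForm_self, ⟨1, RatFunc.X, aForm_one_X_ne_zero hu hσt⟩,
    map_aForm hσ (by rw [hσK, hιu, map_neg]), aForm_add_left, aForm_add_right,
    fun c f g hc => ⟨aForm_mul_left hc f g, aForm_mul_right hc f g⟩,
    fun x f g hxfg => ?_⟩
  obtain ⟨⟨x₀, x₁⟩, hx, -⟩ := hQdec x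
  have hg : g = algebraMap K (RatFunc K) x₀ * f
      + algebraMap K (RatFunc K) x₁ * (σ f * σ RatFunc.X) := by
    refine hinj (hxfg.symm.trans ?_)
    rw [hx, map_add, map_mul, hφ'K, hφ'K, hφ'j,
      add_mul_J_mul_mul_eq hJf (J_mul_one_add_J_mul_X_inv hJf hJ2 hσt)]
  constructor
  · intro h0
    refine or_iff_not_imp_right.2 fun hξ => ?_
    have hf : f ≠ 0 := by rintro rfl; simp at hξ
    obtain ⟨c₀, hιc₀, hgc₀⟩ :=
      exists_fixed_of_aForm_eq_zero hu hσ hσK (RatFunc.X_mul_map_X hσt) hf x₀ x₁ hg h0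
    obtain ⟨c, rfl⟩ := hfix c₀ hιc₀
    exact ⟨c, eq_of_map_mul_eq φ' (by rw [hxfg, hφ'k, hgc₀, map_mul, mul_assoc]) hξ⟩
  · rintro (⟨c, rfl⟩ | hξ)
    · have hcf : g = algebraMap K (RatFunc K) (algebraMap k K c) * f :=
        hinj (hxfg.symm.trans (by simp only [hφ'k, map_mul, mul_assoc]))
      rw [hcf, aForm_mul_right (by rw [hσK, AlgEquiv.commutes]), aForm_self, mul_zero]
    · obtain rfl : f = 0 := hinj (by simpa using hξ)
      obtain rfl : g = 0 := hinj (by simp [← hxfg])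
      exact aForm_self 0

theorem alternating_form_on_I
    -- k is a field, K/k a degree-2 Galois extension with nontrivial automorphism ι,
    -- b a nonzero element of k
    (k K : Type) [Field k] [Field K] [Algebra k K]
    (hrank : Module.finrank k K = 2)
    (ι : K ≃ₐ[k] K) (hι : ∃ x : K, ι x ≠ x)
    (hι2 : ∀ x : K, ι (ι x) = x)
    (hfix : ∀ x : K, ι x = x → ∃ c : k, algebraMap k K c = x)
    (b : k) (hb : b ≠ 0)
    -- Q = (K, ι, b) is the crossed-product quaternion k-algebra, a division ring,
    -- containing K via φ, with j·j = b, j·x = ι(x)·j, and Q = K ⊕ K·j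
    (Q : Type) [DivisionRing Q] [Algebra k Q]
    (φ : K →ₐ[k] Q) (j : Q)
    (hj2 : j * j = algebraMap k Q b)
    (hjx : ∀ x : K, j * φ x = φ (ι x) * j)
    (hQdec : ∀ q : Q, ∃! p : K × K, q = φ p.1 + φ p.2 * j)
    -- σ is the automorphism of K(t) acting as ι on K with σ(t) = b·t⁻¹
    (σ : RatFunc K ≃+* RatFunc K)
    (hσK : ∀ x : K, σ (algebraMap K (RatFunc K) x) = algebraMap K (RatFunc K) (ι x))
    (hσt : σ RatFunc.X = algebraMap K (RatFunc K) (algebraMap k K b) * RatFunc.X⁻¹)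
    -- Q_F = Q ⊗_k F, identified with K(t) ⊕ K(t)·j : it contains K(t) via ψ and an
    -- element J (the image of j) with J·J = b, J·ψ(f) = ψ(σ f)·J, Q_F = ψ(K(t)) ⊕ ψ(K(t))·J,
    -- and Q embeds via φ' compatibly with φ and j
    (QF : Type) [Ring QF]
    (ψ : RatFunc K →+* QF) (J : QF)
    (hJ2 : J * J = ψ (algebraMap K (RatFunc K) (algebraMap k K b)))
    (hJf : ∀ f : RatFunc K, J * ψ f = ψ (σ f) * J)
    (hQFdec : ∀ q : QF, ∃! p : RatFunc K × RatFunc K, q = ψ p.1 + ψ p.2 * J)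
    (φ' : Q →+* QF)
    (hφ'K : ∀ x : K, φ' (φ x) = ψ (algebraMap K (RatFunc K) x))
    (hφ'j : φ' j = J)
    -- u is a nonzero element of K with ι(u) = -u
    (u : K) (hu : u ≠ 0) (hιu : ι u = -u)
    -- ε = 1 + j·t⁻¹
    (ε : QF) (hε : ε = 1 + J * ψ RatFunc.X⁻¹) :
    -- a is alternating ...
    (∀ f : RatFunc K, aForm σ u f f = 0) ∧
    -- ... nonzero ...
    (∃ f g : RatFunc K, aForm σ u f g ≠ 0) ∧
    -- ... takes values in F = K(t)^σ ...
    (∀ f g : RatFunc K, σ (aForm σ u f g) = aForm σ u f g) ∧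
    -- ... and is F-bilinear
    (∀ f₁ f₂ g : RatFunc K, aForm σ u (f₁ + f₂) g = aForm σ u f₁ g + aForm σ u f₂ g) ∧
    (∀ f g₁ g₂ : RatFunc K, aForm σ u f (g₁ + g₂) = aForm σ u f g₁ + aForm σ u f g₂) ∧
    (∀ c f g : RatFunc K, σ c = c →
      aForm σ u (c * f) g = c * aForm σ u f g ∧ aForm σ u f (c * g) = c * aForm σ u f g) ∧
    -- for x ∈ Q and ξ = f·ε ∈ I (with x·ξ = g·ε), a(ξ, x·ξ) = 0 iff x ∈ k·1 or ξ = 0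
    (∀ (x : Q) (f g : RatFunc K), φ' x * (ψ f * ε) = ψ g * ε →
      (aForm σ u f g = 0 ↔ (∃ c : k, x = algebraMap k Q c) ∨ ψ f * ε = 0)) :=
  alternating_form_on_I_general k K ι hι2 hfix b hb Q φ j hQdec σ hσK hσt QF ψ J hJ2 hJf hQFdec φ'
    hφ'K hφ'j u hu hιu ε hε
end

section
/- Let s be a sesquilinear form on a finitely generated right Q-module V, with associated even skew-hermitian form h_s. Let d be a natural number and v₀, …, v_d ∈ V be such that q̃(v₀,…,v_d) = 0. If s(v_d, v_d) ∉ k·1, then h_s(v_d, v_d) ≠ 0. -/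
/-!
Write `x ∈ Q` as `c₀ + c₁·j` with `c₀, c₁ ∈ K`. Since `J·ε = σ(t)·ε`, one gets
`x·tⁱ·ε = (c₀·tⁱ + c₁·σ(t)^(i+1))·ε` with `σ(t) = b·t⁻¹`, so every summand of `q̃` is an explicit
Laurent polynomial in `t` with exponents in `[-(2d+1), 2d+1]`. The exponent `2d+1` occurs only in
`a(t^d·ε, s(v_d, v_d)·t^d·ε)`, with coefficient `-u·ι(c₁)` for `s(v_d, v_d) = c₀ + c₁·j`. Hence
`q̃ = 0` forces `c₁ = 0`, so `s(v_d, v_d) = c₀ ∈ K`; if moreover `h_s(v_d, v_d) = c₀ - ι(c₀)`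
vanished, `c₀` would lie in `k`.
-/

open scoped TensorProduct

section Eps

variable {L QF : Type*} [Field L] [Ring QF] (σ : L ≃+* L) (ψ : L →+* QF) (J : QF) (t : L)

local notation "ε" => 1 + J * ψ t⁻¹

theorem map_mul_eps (hJf : ∀ f : L, J * ψ f = ψ (σ f) * J) (f : L) :
    ψ f * ε = ψ f + ψ (f * σ t⁻¹) * J := by
  rw [mul_add, mul_one, hJf, ← mul_assoc, ← map_mul]

theorem eq_of_map_mul_eps_eq (hJf : ∀ f : L, J * ψ f = ψ (σ f) * J)
    (hdec : ∀ q : QF, ∃! p : L × L, q = ψ p.1 + ψ p.2 * J) {f g : L}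
    (h : ψ f * ε = ψ g * ε) : f = g := by
  have hf := map_mul_eps σ ψ J t hJf f
  have hg := map_mul_eps σ ψ J t hJf g
  rw [h] at hf
  exact congrArg Prod.fst ((hdec _).unique (y₁ := (f, _)) (y₂ := (g, _)) hf hg)

theorem J_mul_eps (hJf : ∀ f : L, J * ψ f = ψ (σ f) * J) (hJ2 : J * J = ψ (σ t * t))
    (ht : t ≠ 0) : J * ε = ψ (σ t) * ε := by
  rw [map_mul_eps σ ψ J t hJf, mul_add, mul_one, ← mul_assoc, hJ2, ← map_mul, map_inv₀,
    mul_assoc, mul_inv_cancel₀ ht, mul_one, mul_inv_cancel₀ ((map_ne_zero σ).mpr ht), map_one,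
    one_mul, add_comm]

theorem add_mul_J_mul_pow_mul_eps (hJf : ∀ f : L, J * ψ f = ψ (σ f) * J)
    (hJ2 : J * J = ψ (σ t * t)) (ht : t ≠ 0) (a c : L) (i : ℕ) :
    (ψ a + ψ c * J) * (ψ (t ^ i) * ε) =
      ψ (a * t ^ i + c * σ t ^ (i + 1)) * ε := by
  have hJ : J * (ψ (t ^ i) * ε) = ψ (σ t ^ (i + 1)) * ε := by
    rw [← mul_assoc, hJf, mul_assoc, J_mul_eps σ ψ J t hJf hJ2 ht, ← mul_assoc, ← map_mul,
      map_pow, ← pow_succ]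
  rw [add_mul, mul_assoc (ψ c), hJ, ← mul_assoc, ← mul_assoc, ← map_mul, ← map_mul, ← add_mul,
    ← map_add]

end Eps

section Numerator

open RatFunc (X)

variable {K : Type} [Field K] (σ : RatFunc K ≃+* RatFunc K) (ι : K →+* K)

local notation "𝒞" => algebraMap K (RatFunc K)

/-- `(c.1 + c.2·j)·tⁱ·ε = epsCoeff σ c i · ε` in `Q_F`. -/
noncomputable def epsCoeff (c : K × K) (i : ℕ) : RatFunc K :=
  𝒞 c.1 * X ^ i + 𝒞 c.2 * σ X ^ (i + 1)

theorem aForm_X_pow_epsCoeff (hσK : ∀ x : K, σ (𝒞 x) = 𝒞 (ι x)) (hσσ : σ (σ X) = X)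
    (u : K) (c : K × K) (i i' : ℕ) :
    aForm σ u (X ^ i) (epsCoeff σ c i') =
      𝒞 (u * c.1) * σ X ^ i * X ^ i' + 𝒞 (u * c.2) * σ X ^ (i + i' + 1)
        - 𝒞 (u * ι c.1) * X ^ i * σ X ^ i' - 𝒞 (u * ι c.2) * X ^ (i + i' + 1) := by
  simp only [aForm, epsCoeff, map_add, map_mul, map_pow, hσK, hσσ]
  ring

/-- `tᴺ·a(tⁱ·ε, epsCoeff σ c i' · ε)` when `σ(t) = β·t⁻¹`; the natural subtractions are exact as
soon as `i + i' + 1 ≤ N`. -/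
noncomputable def aFormNumerator (β u : K) (c : K × K) (N i i' : ℕ) : Polynomial K :=
  .C (u * c.1 * β ^ i) * .X ^ (N + i' - i)
    + .C (u * c.2 * β ^ (i + i' + 1)) * .X ^ (N - (i + i' + 1))
    - .C (u * ι c.1 * β ^ i') * .X ^ (N + i - i') - .C (u * ι c.2) * .X ^ (N + i + i' + 1)

theorem algebraMap_aFormNumerator (hσK : ∀ x : K, σ (𝒞 x) = 𝒞 (ι x)) {β : K} (hβ : β ≠ 0)
    (hιβ : ι β = β) (hσX : σ X = 𝒞 β * X⁻¹) (u : K) (c : K × K) {N i i' : ℕ}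
    (h : i + i' + 1 ≤ N) :
    algebraMap (Polynomial K) (RatFunc K) (aFormNumerator ι β u c N i i') =
      X ^ N * aForm σ u (X ^ i) (epsCoeff σ c i') := by
  have hX : (X : RatFunc K) ≠ 0 := RatFunc.X_ne_zero
  have hσσ : σ (σ X) = X := by
    rw [hσX, map_mul, hσK, hιβ, map_inv₀, hσX, mul_inv, inv_inv, ← mul_assoc,
      mul_inv_cancel₀ ((map_ne_zero _).mpr hβ), one_mul]
  rw [aForm_X_pow_epsCoeff σ ι hσK hσσ, hσX, aFormNumerator]
  simp only [map_add, map_sub, map_mul, map_pow, RatFunc.algebraMap_C, RatFunc.algebraMap_X,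
    ← RatFunc.algebraMap_eq_C]
  rw [pow_sub₀ _ hX (by omega : i ≤ N + i'), pow_sub₀ _ hX h,
    pow_sub₀ _ hX (by omega : i' ≤ N + i)]
  simp only [mul_pow, inv_pow]
  field_simp
  ring

theorem coeff_aFormNumerator (β u : K) (c : K × K) {N i i' : ℕ} (h : i + i' + 1 ≤ N) :
    (aFormNumerator ι β u c N i i').coeff (2 * N) =
      if i + i' + 1 = N then -(u * ι c.2) else 0 := by
  simp only [aFormNumerator, Polynomial.coeff_add, Polynomial.coeff_sub, Polynomial.coeff_C_mul,
    Polynomial.coeff_X_pow, mul_ite, mul_one, mul_zero]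
  split_ifs <;> first | omega | ring

theorem snd_eq_zero_of_sum_aForm_eq_zero (hσK : ∀ x : K, σ (𝒞 x) = 𝒞 (ι x)) {β : K}
    (hβ : β ≠ 0) (hιβ : ι β = β) (hσX : σ X = 𝒞 β * X⁻¹) {u : K} (hu : u ≠ 0) {d : ℕ}
    (e : Fin (d + 1) → K × K) (e' : Fin (d + 1) → Fin (d + 1) → K × K)
    (h : (∑ i : Fin (d + 1), aForm σ u (X ^ (i : ℕ)) (epsCoeff σ (e i) i)) +
      ∑ i : Fin (d + 1), ∑ i' : Fin (d + 1),
        (if (i : ℕ) < (i' : ℕ) then aForm σ u (X ^ (i : ℕ)) (epsCoeff σ (e' i i') i') else 0) = 0) :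
    (e (Fin.last d)).2 = 0 := by
  set P : Polynomial K := (∑ i : Fin (d + 1), aFormNumerator ι β u (e i) (2 * d + 1) i i) +
    ∑ i : Fin (d + 1), ∑ i' : Fin (d + 1),
      if (i : ℕ) < (i' : ℕ) then aFormNumerator ι β u (e' i i') (2 * d + 1) i i' else 0
  have hnum (c : K × K) (i i' : Fin (d + 1)) :
      algebraMap (Polynomial K) (RatFunc K) (aFormNumerator ι β u c (2 * d + 1) i i') =
        X ^ (2 * d + 1) * aForm σ u (X ^ (i : ℕ)) (epsCoeff σ c i') :=
    algebraMap_aFormNumerator σ ι hσK hβ hιβ hσX u c (by omega)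
  have hP : P = 0 := by
    apply RatFunc.algebraMap_injective K
    simp only [P, map_add, map_sum, apply_ite (algebraMap (Polynomial K) (RatFunc K)), map_zero,
      hnum, ← Finset.mul_sum, ← mul_ite_zero, ← mul_add, h, mul_zero]
  have hcoeff : P.coeff (2 * (2 * d + 1)) = -(u * ι (e (Fin.last d)).2) := by
    simp only [P, Polynomial.coeff_add, Polynomial.finsetSum_coeff,
      apply_ite (fun p : Polynomial K => p.coeff (2 * (2 * d + 1))), Polynomial.coeff_zero]
    have hoff : ∀ i i' : Fin (d + 1), (if (i : ℕ) < i' then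
        (aFormNumerator ι β u (e' i i') (2 * d + 1) i i').coeff (2 * (2 * d + 1)) else 0) = 0 := by
      intro i i'
      split_ifs with hii'
      · rw [coeff_aFormNumerator ι β u _ (by omega), if_neg (by omega)]
      · rfl
    rw [Finset.sum_eq_single (Fin.last d), coeff_aFormNumerator ι β u _ (by omega),
      if_pos (by rw [Fin.val_last]; omega),
      Finset.sum_eq_zero fun i _ => Finset.sum_eq_zero fun i' _ => hoff i i', add_zero]
    · intro i _ hi
      rw [coeff_aFormNumerator ι β u _ (by omega), if_neg]
      exact fun h => hi (Fin.ext (by rw [Fin.val_last]; omega))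
    · simp
  rw [hP, Polynomial.coeff_zero, eq_comm, neg_eq_zero] at hcoeff
  simpa [hu] using hcoeff

end Numerator

theorem hs_nonzero_of_isotropic_of_not_in_k_general
    -- k is a field, K/k a degree-2 Galois extension with nontrivial automorphism ι,
    -- b a nonzero element of k
    (k K : Type) [Field k] [Field K] [Algebra k K]
    (ι : K ≃ₐ[k] K)
    (hfix : ∀ x : K, ι x = x → ∃ c : k, algebraMap k K c = x)
    (b : k) (hb : b ≠ 0)
    -- Q = (K, ι, b) is the crossed-product quaternion k-algebra, a division ring,
    -- containing K via φ, with j·j = b, j·x = ι(x)·j, and Q = K ⊕ K·j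
    (Q : Type) [DivisionRing Q] [Algebra k Q]
    (φ : K →ₐ[k] Q) (j : Q)
    (hQdec : ∀ q : Q, ∃! p : K × K, q = φ p.1 + φ p.2 * j)
    -- the canonical involution of Q
    (conj : Q → Q)
    (hconj_K : ∀ x : K, conj (φ x) = φ (ι x))
    -- σ is the automorphism of K(t) acting as ι on K with σ(t) = b·t⁻¹
    (σ : RatFunc K ≃+* RatFunc K)
    (hσK : ∀ x : K, σ (algebraMap K (RatFunc K) x) = algebraMap K (RatFunc K) (ι x))
    (hσt : σ RatFunc.X = algebraMap K (RatFunc K) (algebraMap k K b) * RatFunc.X⁻¹)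
    -- Q_F = Q ⊗_k F, identified with K(t) ⊕ K(t)·j : it contains K(t) via ψ and an
    -- element J (the image of j) with J·J = b, J·ψ(f) = ψ(σ f)·J, Q_F = ψ(K(t)) ⊕ ψ(K(t))·J,
    -- and Q embeds via φ' compatibly with φ and j
    (QF : Type) [Ring QF]
    (ψ : RatFunc K →+* QF) (J : QF)
    (hJ2 : J * J = ψ (algebraMap K (RatFunc K) (algebraMap k K b)))
    (hJf : ∀ f : RatFunc K, J * ψ f = ψ (σ f) * J)
    (hQFdec : ∀ q : QF, ∃! p : RatFunc K × RatFunc K, q = ψ p.1 + ψ p.2 * J)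
    (φ' : Q →+* QF)
    (hφ'K : ∀ x : K, φ' (φ x) = ψ (algebraMap K (RatFunc K) x))
    (hφ'j : φ' j = J)
    -- u is a nonzero element of K with ι(u) = -u
    (u : K) (hu : u ≠ 0)
    -- V is a finitely generated right Q-module and s a sesquilinear form on V
    (V : Type)
    (s : V → V → Q)
    -- r x i is the unique element of K(t) with x·tⁱ·ε = (r x i)·ε
    (r : Q → ℕ → RatFunc K)
    (hr : ∀ (x : Q) (i : ℕ),
      φ' x * (ψ (RatFunc.X ^ i) * (1 + J * ψ RatFunc.X⁻¹)) =
        ψ (r x i) * (1 + J * ψ RatFunc.X⁻¹))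
    (d : ℕ) (v : Fin (d + 1) → V)
    -- q̃(v₀, …, v_d) = 0
    (hq : ((∑ i : Fin (d + 1), aForm σ u (RatFunc.X ^ (i : ℕ)) (r (s (v i) (v i)) (i : ℕ))) +
      ∑ i : Fin (d + 1), ∑ i' : Fin (d + 1),
        if (i : ℕ) < (i' : ℕ) then
          aForm σ u (RatFunc.X ^ (i : ℕ))
            (r (s (v i) (v i') - conj (s (v i') (v i))) (i' : ℕ))
        else 0) = 0)
    -- s(v_d, v_d) ∉ k·1
    (hnot : ¬ ∃ c : k, s (v (Fin.last d)) (v (Fin.last d)) = algebraMap k Q c) :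
    -- h_s(v_d, v_d) ≠ 0
    s (v (Fin.last d)) (v (Fin.last d)) -
      conj (s (v (Fin.last d)) (v (Fin.last d))) ≠ 0 := by
  choose p hp using fun q => (hQdec q).exists
  have hX : (RatFunc.X : RatFunc K) ≠ 0 := RatFunc.X_ne_zero
  have hJsq : J * J = ψ (σ RatFunc.X * RatFunc.X) := by
    rw [hJ2, hσt, mul_assoc, inv_mul_cancel₀ hX, mul_one]
  have hr' : ∀ x i, r x i = epsCoeff σ (p x) i := by
    intro x i
    refine eq_of_map_mul_eps_eq σ ψ J RatFunc.X hJf hQFdec ?_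
    rw [← hr, epsCoeff, ← add_mul_J_mul_pow_mul_eps σ ψ J _ hJf hJsq hX, ← hφ'K, ← hφ'K, ← hφ'j,
      ← map_mul, ← map_add, ← hp x]
  simp only [hr'] at hq
  have hc₁ := snd_eq_zero_of_sum_aForm_eq_zero σ ι hσK ((map_ne_zero _).mpr hb) (ι.commutes b)
    hσt hu _ _ hq
  set x := s (v (Fin.last d)) (v (Fin.last d))
  have hx : x = φ (p x).1 := by simpa [hc₁] using hp x
  intro hconj
  have hfixed : ι (p x).1 = (p x).1 := by
    refine (φ : K →+* Q).injective ?_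
    change φ _ = φ _
    rw [← hconj_K, ← hx]
    exact (sub_eq_zero.mp hconj).symm
  obtain ⟨c, hc⟩ := hfix _ hfixed
  exact hnot ⟨c, by rw [hx, ← hc, φ.commutes]⟩

theorem hs_nonzero_of_isotropic_of_not_in_k
    -- k is a field, K/k a degree-2 Galois extension with nontrivial automorphism ι,
    -- b a nonzero element of k
    (k K : Type) [Field k] [Field K] [Algebra k K]
    (hrank : Module.finrank k K = 2)
    (ι : K ≃ₐ[k] K) (hι : ∃ x : K, ι x ≠ x)
    (hι2 : ∀ x : K, ι (ι x) = x)
    (hfix : ∀ x : K, ι x = x → ∃ c : k, algebraMap k K c = x)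
    (b : k) (hb : b ≠ 0)
    -- Q = (K, ι, b) is the crossed-product quaternion k-algebra, a division ring,
    -- containing K via φ, with j·j = b, j·x = ι(x)·j, and Q = K ⊕ K·j
    (Q : Type) [DivisionRing Q] [Algebra k Q]
    (φ : K →ₐ[k] Q) (j : Q)
    (hj2 : j * j = algebraMap k Q b)
    (hjx : ∀ x : K, j * φ x = φ (ι x) * j)
    (hQdec : ∀ q : Q, ∃! p : K × K, q = φ p.1 + φ p.2 * j)
    -- the canonical involution of Q
    (conj : Q → Q)
    (hconj_add : ∀ a b : Q, conj (a + b) = conj a + conj b)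
    (hconj_mul : ∀ a b : Q, conj (a * b) = conj b * conj a)
    (hconj_K : ∀ x : K, conj (φ x) = φ (ι x))
    (hconj_j : conj j = -j)
    -- σ is the automorphism of K(t) acting as ι on K with σ(t) = b·t⁻¹
    (σ : RatFunc K ≃+* RatFunc K)
    (hσK : ∀ x : K, σ (algebraMap K (RatFunc K) x) = algebraMap K (RatFunc K) (ι x))
    (hσt : σ RatFunc.X = algebraMap K (RatFunc K) (algebraMap k K b) * RatFunc.X⁻¹)
    -- Q_F = Q ⊗_k F, identified with K(t) ⊕ K(t)·j : it contains K(t) via ψ and an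
    -- element J (the image of j) with J·J = b, J·ψ(f) = ψ(σ f)·J, Q_F = ψ(K(t)) ⊕ ψ(K(t))·J,
    -- and Q embeds via φ' compatibly with φ and j
    (QF : Type) [Ring QF]
    (ψ : RatFunc K →+* QF) (J : QF)
    (hJ2 : J * J = ψ (algebraMap K (RatFunc K) (algebraMap k K b)))
    (hJf : ∀ f : RatFunc K, J * ψ f = ψ (σ f) * J)
    (hQFdec : ∀ q : QF, ∃! p : RatFunc K × RatFunc K, q = ψ p.1 + ψ p.2 * J)
    (φ' : Q →+* QF)
    (hφ'K : ∀ x : K, φ' (φ x) = ψ (algebraMap K (RatFunc K) x))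
    (hφ'j : φ' j = J)
    -- u is a nonzero element of K with ι(u) = -u
    (u : K) (hu : u ≠ 0) (hιu : ι u = -u)
    -- V is a finitely generated right Q-module and s a sesquilinear form on V
    (V : Type) [AddCommGroup V] [Module Qᵐᵒᵖ V] [Module.Finite Qᵐᵒᵖ V]
    (s : V → V → Q)
    (hs1 : ∀ v v' w : V, s (v + v') w = s v w + s v' w)
    (hs2 : ∀ v w w' : V, s v (w + w') = s v w + s v w')
    (hsesq : ∀ (v w : V) (x y : Q),
      s (MulOpposite.op x • v) (MulOpposite.op y • w) = conj x * s v w * y)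
    -- r x i is the unique element of K(t) with x·tⁱ·ε = (r x i)·ε
    (r : Q → ℕ → RatFunc K)
    (hr : ∀ (x : Q) (i : ℕ),
      φ' x * (ψ (RatFunc.X ^ i) * (1 + J * ψ RatFunc.X⁻¹)) =
        ψ (r x i) * (1 + J * ψ RatFunc.X⁻¹))
    (d : ℕ) (v : Fin (d + 1) → V)
    -- q̃(v₀, …, v_d) = 0
    (hq : ((∑ i : Fin (d + 1), aForm σ u (RatFunc.X ^ (i : ℕ)) (r (s (v i) (v i)) (i : ℕ))) +
      ∑ i : Fin (d + 1), ∑ i' : Fin (d + 1),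
        if (i : ℕ) < (i' : ℕ) then
          aForm σ u (RatFunc.X ^ (i : ℕ))
            (r (s (v i) (v i') - conj (s (v i') (v i))) (i' : ℕ))
        else 0) = 0)
    -- s(v_d, v_d) ∉ k·1
    (hnot : ¬ ∃ c : k, s (v (Fin.last d)) (v (Fin.last d)) = algebraMap k Q c) :
    -- h_s(v_d, v_d) ≠ 0
    s (v (Fin.last d)) (v (Fin.last d)) -
      conj (s (v (Fin.last d)) (v (Fin.last d))) ≠ 0 :=
  hs_nonzero_of_isotropic_of_not_in_k_general k K ι hfix b hb Q φ j hQdec conj hconj_K σ hσK hσt QF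
    ψ J hJ2 hJf hQFdec φ' hφ'K hφ'j u hu V s r hr d v hq hnot
end
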